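/- arXiv:2312.13809 — 2 statements merged into one kernel-verified Lean document; each statement's English description precedes it below -/
import Mathlib

section
/- Let n ∈ ℕ, ω ∈ ℝ, x_1,…,x_{2n+1} ∈ ℝ, and let p and q be complex polynomials of degree ≤ n with q ≢ 0, and let v : ℂ → ℂ be an entire function, such that p(z) − q(z)·e^{ωz} = (∏_{j=1}^{2n+1} (z − i x_j)) · v(z) for all z ∈ ℂ. Then p†(z)·p(z) = q†(z)·q(z) identically as polynomials; in particular |p(ix)| = |q(ix)| for all x ∈ ℝ, so the rational interpolant p/q to e^{ωz} at the nodes i x_1, …, i x_{2n+1} on the imaginary axis is unitary, i.e. lies in 𝒰_n. -/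
/-!
Reflecting the interpolation identity through `z ↦ -z̄` gives `p† - q† e^{-ωz} = -N v*`, where
`N = ∏ (z - i xⱼ)` and `v*(z) = conj (v (-z̄))`: the nodes lie on the imaginary axis and there
is an odd number of them. Eliminating the exponential between the two identities shows that `N`
divides `p†p - q†q`, a polynomial of degree at most `2n < deg N`; hence `p†p = q†q`.
-/

open Polynomial

noncomputable section

/-- `p†(z) := conj(p)(−z)`: conjugate the coefficients of `p` and substitute `−z`. -/
def pdag (p : Polynomial ℂ) : Polynomial ℂ :=
  (p.map (starRingEnd ℂ)).comp (-Polynomial.X)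

/-- `𝒰 n`: the unitary rational functions of degree `(n,n)`, i.e. rational functions
of the form `p†/p` with `p` a nonzero complex polynomial of degree at most `n`. -/
def unitaryClass (n : ℕ) : Set (RatFunc ℂ) :=
  {r | ∃ p : Polynomial ℂ, p ≠ 0 ∧ p.natDegree ≤ n ∧ r = RatFunc.mk (pdag p) p}

/-- Evaluation of a rational function at the imaginary point `i·x`. -/
def ieval (r : RatFunc ℂ) (x : ℝ) : ℂ :=
  RatFunc.eval (RingHom.id ℂ) (Complex.I * (x : ℂ)) r

/-- The uniform approximation error `‖r − exp(ω·)‖ = sup_{x∈[−1,1]} |r(ix) − e^{iωx}|`. -/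
def errNorm (ω : ℝ) (r : RatFunc ℂ) : ℝ :=
  sSup ((fun x : ℝ => ‖ieval r x - Complex.exp (Complex.I * ω * x)‖) ''
    Set.Icc (-1 : ℝ) 1)

/-- The maximal phase error `max_{x∈[−1,1]} |g(x) − ωx|`. -/
def phaseErrSup (ω : ℝ) (g : ℝ → ℝ) : ℝ :=
  sSup ((fun x : ℝ => |g x - ω * x|) '' Set.Icc (-1 : ℝ) 1)

/-- `g` is a phase function for `r ∈ 𝒰 n`: for some `m ≤ n`, `θ ∈ ℝ` and poles
`s j = ξ j + i μ j` with `ξ j ≠ 0`, `r` has the product representation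
`r(z) = (−1)^m e^{iθ} ∏ (z + conj s_j)/(z − s_j)` and
`g(x) = θ + 2 Σ_j arctan((x − μ j)/ξ j)` with `r(ix) = e^{i g(x)}`. -/
def IsPhaseFun (n : ℕ) (r : RatFunc ℂ) (g : ℝ → ℝ) : Prop :=
  ∃ (m : ℕ) (θ : ℝ) (μ ξ : Fin m → ℝ), m ≤ n ∧ (∀ j, ξ j ≠ 0) ∧
    r = RatFunc.mk
      (Polynomial.C ((-1 : ℂ) ^ m * Complex.exp (θ * Complex.I)) *
        ∏ j, (Polynomial.X + Polynomial.C (starRingEnd ℂ ((ξ j : ℂ) + (μ j : ℂ) * Complex.I))))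
      (∏ j, (Polynomial.X - Polynomial.C ((ξ j : ℂ) + (μ j : ℂ) * Complex.I))) ∧
    (∀ x : ℝ, g x = θ + 2 * ∑ j, Real.arctan ((x - μ j) / ξ j)) ∧
    (∀ x : ℝ, ieval r x = Complex.exp (Complex.I * g x))

/-- The phase error of `g` equioscillates between `m` points in `[−1,1]`. -/
def EquiOsc (ω : ℝ) (g : ℝ → ℝ) (m : ℕ) : Prop :=
  ∃ (η : Fin m → ℝ) (ε : ℝ), StrictMono η ∧ (∀ j, η j ∈ Set.Icc (-1 : ℝ) 1) ∧
    (ε = 1 ∨ ε = -1) ∧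
    ∀ j : Fin m, g (η j) - ω * η j = ε * (-1 : ℝ) ^ (j : ℕ) * phaseErrSup ω g

end

open ComplexConjugate

lemma eval_pdag (p : ℂ[X]) (z : ℂ) : (pdag p).eval z = conj (p.eval (-conj z)) := by
  rw [pdag, eval_comp, eval_neg, eval_X, eval_map,
    show -z = conj (-conj z) by simp, eval₂_at_apply]

lemma eval_pdag_I_mul (p : ℂ[X]) (t : ℝ) :
    (pdag p).eval (Complex.I * t) = conj (p.eval (Complex.I * t)) := by
  simp [eval_pdag]

lemma pdag_pdag (p : ℂ[X]) : pdag (pdag p) = p :=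
  Polynomial.funext fun z => by simp [eval_pdag]

lemma pdag_add (p q : ℂ[X]) : pdag (p + q) = pdag p + pdag q :=
  Polynomial.funext fun z => by simp [eval_pdag]

lemma pdag_C_mul (a : ℂ) (p : ℂ[X]) : pdag (C a * p) = C (conj a) * pdag p :=
  Polynomial.funext fun z => by simp [eval_pdag]

lemma natDegree_pdag_le (p : ℂ[X]) : (pdag p).natDegree ≤ p.natDegree :=
  natDegree_comp_le.trans (by simp)

lemma norm_eval_I_mul_eq_of_pdag_mul_self_eq {p q : ℂ[X]} (h : pdag p * p = pdag q * q)
    (t : ℝ) : ‖p.eval (Complex.I * t)‖ = ‖q.eval (Complex.I * t)‖ := by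
  have h' := congrArg (eval (Complex.I * t)) h
  simp only [eval_mul, eval_pdag_I_mul, ← Complex.normSq_eq_conj_mul_self,
    Complex.ofReal_inj] at h'
  rw [Complex.norm_def, Complex.norm_def, h']

lemma mk_mem_unitaryClass_of_pdag_mul_self_eq {n : ℕ} {p q : ℂ[X]} (hp : p.natDegree ≤ n)
    (hq : q.natDegree ≤ n) (hq0 : q ≠ 0) (h : pdag p * p = pdag q * q) :
    RatFunc.mk p q ∈ unitaryClass n := by
  by_cases hP : pdag p + q = 0
  · -- here `p = -q†`, so `p / q = (i q)† / (i q)`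
    have hpq : p = -pdag q := by
      rw [← pdag_pdag p, eq_neg_of_add_eq_zero_left hP, ← neg_one_mul, ← C_1, ← C_neg,
        pdag_C_mul]
      simp
    refine ⟨C Complex.I * q, mul_ne_zero (by simp) hq0, (natDegree_C_mul_le _ _).trans hq, ?_⟩
    rw [RatFunc.mk_eq_mk hq0 (mul_ne_zero (by simp) hq0), pdag_C_mul, hpq, Complex.conj_I,
      C_neg]
    ring
  · refine ⟨pdag p + q, hP, (natDegree_add_le _ _).trans
      (max_le ((natDegree_pdag_le p).trans hp) hq), ?_⟩
    rw [RatFunc.mk_eq_mk hq0 hP, pdag_add, pdag_pdag]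
    linear_combination h

lemma prod_X_sub_C_dvd_of_eval_eq_prod_mul {𝕜 ι : Type*} [NontriviallyNormedField 𝕜]
    [DecidableEq ι] (c : ι → 𝕜) (s : Finset ι) {D : 𝕜[X]} {u : 𝕜 → 𝕜} (hu : Continuous u)
    (hD : ∀ z, D.eval z = (∏ j ∈ s, (z - c j)) * u z) :
    (∏ j ∈ s, (X - C (c j))) ∣ D := by
  induction s using Finset.induction_on generalizing D with
  | empty => simp
  | insert a s ha ih =>
    obtain ⟨E, rfl⟩ : X - C (c a) ∣ D := dvd_iff_isRoot.mpr (by simp [ha, hD])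
    -- cancel `z - c a` away from `c a`, then extend by continuity
    have hE : (fun z => E.eval z) = fun z => (∏ j ∈ s, (z - c j)) * u z := by
      refine Continuous.ext_on (dense_compl_singleton (c a)) E.continuous
        ((continuous_finsetProd _ fun j _ => by fun_prop).mul hu) fun z hz => ?_
      have hz' := hD z
      rw [Finset.prod_insert ha, eval_mul, eval_sub, eval_X, eval_C, mul_assoc] at hz'
      exact mul_left_cancel₀ (sub_ne_zero.mpr hz) hz'
    rw [Finset.prod_insert ha]
    exact mul_dvd_mul_left _ (ih fun z => congrFun hE z)

section Interpolation

variable {ι : Type*} [Fintype ι] {ω : ℝ} {x : ι → ℝ} {p q : ℂ[X]} {v : ℂ → ℂ}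

lemma prod_conj_neg_conj_sub_I_mul (hodd : Odd (Fintype.card ι)) (z : ℂ) :
    ∏ j, conj (-conj z - Complex.I * x j) = -∏ j, (z - Complex.I * x j) := by
  have hj : ∀ j, conj (-conj z - Complex.I * x j) = -(z - Complex.I * x j) := fun j => by
    simp only [map_sub, map_neg, map_mul, Complex.conj_conj, Complex.conj_I, Complex.conj_ofReal]
    ring
  rw [Finset.prod_congr rfl fun j _ => hj j, Finset.prod_neg, Finset.card_univ,
    hodd.neg_one_pow, neg_one_mul]

lemma eval_pdag_sub_mul_exp_neg (hodd : Odd (Fintype.card ι))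
    (hint : ∀ z : ℂ, p.eval z - q.eval z * Complex.exp (ω * z) =
      (∏ j, (z - Complex.I * x j)) * v z) (z : ℂ) :
    (pdag p).eval z - (pdag q).eval z * Complex.exp (-(ω * z)) =
      -(∏ j, (z - Complex.I * x j)) * conj (v (-conj z)) := by
  have h := congrArg conj (hint (-conj z))
  rw [map_sub, map_mul, map_mul, map_prod, prod_conj_neg_conj_sub_I_mul hodd,
    ← Complex.exp_conj] at h
  rw [eval_pdag, eval_pdag, ← h]
  simp

lemma pdag_mul_self_eq_of_interpolates {n : ℕ} (hcard : Fintype.card ι = 2 * n + 1)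
    (hp : p.natDegree ≤ n) (hq : q.natDegree ≤ n) (hv : Continuous v)
    (hint : ∀ z : ℂ, p.eval z - q.eval z * Complex.exp (ω * z) =
      (∏ j, (z - Complex.I * x j)) * v z) :
    pdag p * p = pdag q * q := by
  classical
  have hdag := eval_pdag_sub_mul_exp_neg (hcard ▸ odd_two_mul_add_one n) hint
  -- `p†p - q†q = p (p† - q† e^{-ωz}) + q† e^{-ωz} (p - q e^{ωz})`
  have hN : (∏ j, (X - C (Complex.I * x j))) ∣ pdag p * p - pdag q * q := by
    refine prod_X_sub_C_dvd_of_eval_eq_prod_mul _ _ (u := fun z =>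
      (pdag q).eval z * Complex.exp (-(ω * z)) * v z - conj (v (-conj z)) * p.eval z)
      (by fun_prop) fun z => ?_
    have hexp : Complex.exp (-(ω * z)) * Complex.exp (ω * z) = 1 := by
      rw [← Complex.exp_add]; simp
    simp only [eval_sub, eval_mul]
    linear_combination p.eval z * hdag z +
      (pdag q).eval z * Complex.exp (-(ω * z)) * hint z + (pdag q).eval z * q.eval z * hexp
  have hdeg :
      (pdag p * p - pdag q * q).natDegree < (∏ j, (X - C (Complex.I * x j))).natDegree := by
    rw [natDegree_finsetProd_X_sub_C_eq_card, Finset.card_univ, hcard]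
    have := natDegree_pdag_le p
    have := natDegree_pdag_le q
    refine Nat.lt_succ_of_le ((natDegree_sub_le _ _).trans (max_le ?_ ?_)) <;>
      exact natDegree_mul_le.trans (by omega)
  exact sub_eq_zero.mp (eq_zero_of_dvd_of_natDegree_lt hN hdeg)

end Interpolation

/-- If `p, q` of degree ≤ n (`q ≠ 0`) and an entire function `v` satisfy the
linearized interpolation identity
`p(z) − q(z) e^{ωz} = (∏_{j=1}^{2n+1} (z − i x_j)) · v(z)` for all `z ∈ ℂ`, then
`p† p = q† q` as polynomials; in particular `|p(ix)| = |q(ix)|` for all real `x`, and the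
rational interpolant `p/q` is unitary, i.e. lies in `𝒰_n`. -/
theorem rational_interpolant_unitary (n : ℕ) (ω : ℝ) (x : Fin (2 * n + 1) → ℝ)
    (p q : Polynomial ℂ) (hp : p.natDegree ≤ n) (hq : q.natDegree ≤ n) (hq0 : q ≠ 0)
    (v : ℂ → ℂ) (hv : Differentiable ℂ v)
    (hint : ∀ z : ℂ, p.eval z - q.eval z * Complex.exp ((ω : ℂ) * z) =
      (∏ j, (z - Complex.I * ((x j : ℝ) : ℂ))) * v z) :
    pdag p * p = pdag q * q ∧
    (∀ t : ℝ, ‖p.eval (Complex.I * (t : ℂ))‖ =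
      ‖q.eval (Complex.I * (t : ℂ))‖) ∧
    RatFunc.mk p q ∈ unitaryClass n := by
  have h := pdag_mul_self_eq_of_interpolates (Fintype.card_fin _) hp hq hv.continuous hint
  exact ⟨h, norm_eval_I_mul_eq_of_pdag_mul_self_eq h,
    mk_mem_unitaryClass_of_pdag_mul_self_eq hp hq hq0 h⟩
end

section
/- Let n ∈ ℕ, ω ∈ (0, (n+1)π), and let r ∈ 𝒰_n be the unitary best approximation to e^{iωx}, with unique phase function g (max_{x∈[−1,1]} |g(x) − ωx| < π) and equioscillation points −1 = η_1 < ⋯ < η_{2n+2} = 1. Then: |r(iη_j) − e^{iωη_j}| = ‖r − exp(ω·)‖ for j = 1,…,2n+2, and the equioscillation points are exactly the points of [−1,1] at which |r(ix) − e^{iωx}| and |g(x) − ωx| attain their maxima; the phase error g(x) − ωx is strictly monotonic between neighboring equioscillation points; and for each j = 1,…,2n+1 the phase error has exactly one zero x_j in the open interval (η_j, η_{j+1}), this zero is simple, and r interpolates the exponential there: r(i x_j) = e^{iω x_j}. -/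
open Polynomial

/-!
The phase error `e x = g x - ω * x` has derivative `2 ∑ ξⱼ / ((x - μⱼ)² + ξⱼ²) - ω`; clearing
denominators turns it into a polynomial of degree exactly `2m ≤ 2n` (leading coefficient `-ω`).
The `2n` interior equioscillation points are extrema of `e`, so they already exhaust its critical
points. Hence `e` is strictly monotone between neighbouring points, running from `±M` to `∓M`,
which locates the maxima of `|e|` and gives one simple zero per gap. Finally, since `|e| ≤ M < π`,
`|r(ix) - e^{iωx}| = 2 sin (|e x| / 2)` is a strictly increasing function of `|e x|`, so the
approximation error is maximal exactly where the phase error is.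
-/

open Polynomial Real Set Function Topology

section Phase

open Finset

variable {ι : Type*} [Fintype ι]

lemma hasDerivAt_arctan_sub_div {μ ξ : ℝ} (hξ : ξ ≠ 0) (x : ℝ) :
    HasDerivAt (fun t => arctan ((t - μ) / ξ)) (ξ / ((x - μ) ^ 2 + ξ ^ 2)) x := by
  refine (((hasDerivAt_id' x).sub_const μ).div_const ξ).arctan.congr_deriv ?_
  field_simp
  ring

noncomputable def phaseDeriv (μ ξ : ι → ℝ) (x : ℝ) : ℝ := 2 * ∑ j, ξ j / ((x - μ j) ^ 2 + ξ j ^ 2)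

lemma hasDerivAt_phaseError {g : ℝ → ℝ} {θ : ℝ} {μ ξ : ι → ℝ}
    (hg : ∀ x, g x = θ + 2 * ∑ j, arctan ((x - μ j) / ξ j)) (hξ : ∀ j, ξ j ≠ 0) (ω x : ℝ) :
    HasDerivAt (fun t => g t - ω * t) (phaseDeriv μ ξ x - ω) x := by
  have hsum := HasDerivAt.fun_sum (u := univ) fun j _ =>
    hasDerivAt_arctan_sub_div (μ := μ j) (hξ j) x
  have h := ((hsum.const_mul 2).const_add θ).fun_sub ((hasDerivAt_id' x).const_mul ω)
  rw [mul_one] at h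
  simp only [hg]
  exact h

noncomputable def poleQuadratic (μ ξ : ℝ) : ℝ[X] := (X - C μ) ^ 2 + C (ξ ^ 2)

lemma natDegree_poleQuadratic (μ ξ : ℝ) : (poleQuadratic μ ξ).natDegree = 2 := by
  rw [poleQuadratic, natDegree_add_C, natDegree_pow, natDegree_X_sub_C]

lemma monic_poleQuadratic (μ ξ : ℝ) : (poleQuadratic μ ξ).Monic :=
  ((monic_X_sub_C μ).pow 2).add_of_left <| degree_C_le.trans_lt <| by
    rw [degree_pow, degree_X_sub_C]; decide

lemma eval_poleQuadratic (μ ξ x : ℝ) : (poleQuadratic μ ξ).eval x = (x - μ) ^ 2 + ξ ^ 2 := by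
  simp [poleQuadratic]

variable [DecidableEq ι]

noncomputable def phaseDerivNumerator (μ ξ : ι → ℝ) (ω : ℝ) : ℝ[X] :=
  C 2 * ∑ j, C (ξ j) * ∏ k ∈ univ.erase j, poleQuadratic (μ k) (ξ k)
    - C ω * ∏ j, poleQuadratic (μ j) (ξ j)

lemma eval_phaseDerivNumerator {μ ξ : ι → ℝ} (hξ : ∀ j, ξ j ≠ 0) (ω x : ℝ) :
    (phaseDerivNumerator μ ξ ω).eval x
      = (phaseDeriv μ ξ x - ω) * ∏ j, ((x - μ j) ^ 2 + ξ j ^ 2) := by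
  have hq (j : ι) : (x - μ j) ^ 2 + ξ j ^ 2 ≠ 0 := by have := hξ j; positivity
  have hterm (j : ι) : ξ j / ((x - μ j) ^ 2 + ξ j ^ 2) * ∏ k, ((x - μ k) ^ 2 + ξ k ^ 2)
      = ξ j * ∏ k ∈ univ.erase j, ((x - μ k) ^ 2 + ξ k ^ 2) := by
    rw [← mul_prod_erase univ _ (mem_univ j), ← mul_assoc, div_mul_cancel₀ _ (hq j)]
  simp only [phaseDerivNumerator, phaseDeriv, eval_sub, eval_mul, eval_C, eval_finsetSum,
    eval_prod, eval_poleQuadratic, sub_mul, mul_assoc, sum_mul, hterm]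

lemma degree_phaseDerivNumerator (μ ξ : ι → ℝ) {ω : ℝ} (hω : ω ≠ 0) :
    (phaseDerivNumerator μ ξ ω).degree = (2 * Fintype.card ι : ℕ) := by
  have hQ : (∏ j, poleQuadratic (μ j) (ξ j)).Monic :=
    monic_prod_of_monic _ _ fun j _ => monic_poleQuadratic _ _
  have hQdeg : (∏ j, poleQuadratic (μ j) (ξ j)).natDegree = 2 * Fintype.card ι := by
    rw [natDegree_prod_of_monic _ _ fun j _ => monic_poleQuadratic _ _]
    simp [natDegree_poleQuadratic, mul_comm]
  have hterm (j : ι) :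
      (C (ξ j) * ∏ k ∈ univ.erase j, poleQuadratic (μ k) (ξ k)).natDegree
        < 2 * Fintype.card ι := by
    refine (natDegree_C_mul_le _ _).trans_lt ?_
    rw [natDegree_prod_of_monic _ _ fun k _ => monic_poleQuadratic _ _]
    simp only [natDegree_poleQuadratic, sum_const, card_erase_of_mem (mem_univ j), card_univ,
      smul_eq_mul]
    have := Fintype.card_pos_iff.2 ⟨j⟩
    omega
  have hsum : (C 2 * ∑ j, C (ξ j) * ∏ k ∈ univ.erase j, poleQuadratic (μ k) (ξ k)).degree
      < ((2 * Fintype.card ι : ℕ) : WithBot ℕ) :=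
    (degree_C_mul two_ne_zero).trans_lt <| (degree_sum_le _ _).trans_lt <|
      (Finset.sup_lt_iff (WithBot.bot_lt_coe _)).2 fun j _ =>
        degree_le_natDegree.trans_lt (WithBot.coe_lt_coe.2 (hterm j))
  rw [phaseDerivNumerator, degree_sub_eq_right_of_degree_lt] <;>
    rw [degree_C_mul hω, degree_eq_natDegree hQ.ne_zero, hQdeg]
  exact hsum

lemma Polynomial.mem_range_of_isRoot {R : Type*} [CommRing R] [IsDomain R] {p : R[X]}
    (hp : p ≠ 0) {N : ℕ} (hdeg : p.natDegree ≤ N) {y : Fin N → R} (hy : Injective y)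
    (hroot : ∀ k, p.IsRoot (y k)) {x : R} (hx : p.IsRoot x) : x ∈ range y := by
  classical
  by_contra hxy
  refine hp (eq_zero_of_natDegree_lt_card_of_eval_eq_zero' p (insert x (univ.image y)) ?_ ?_)
  · simp only [Finset.mem_insert, Finset.mem_image, Finset.mem_univ, true_and]
    rintro z (rfl | ⟨k, rfl⟩)
    exacts [hx, hroot k]
  · rw [card_insert_of_notMem (by simpa using hxy), card_image_of_injective _ hy, card_univ,
      Fintype.card_fin]
    omega

lemma mem_range_of_phaseDeriv_eq {μ ξ : ι → ℝ} (hξ : ∀ j, ξ j ≠ 0) {ω : ℝ} (hω : ω ≠ 0)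
    {N : ℕ} (hN : 2 * Fintype.card ι ≤ N) {y : Fin N → ℝ} (hy : Injective y)
    (hroot : ∀ k, phaseDeriv μ ξ (y k) = ω) {x : ℝ} (hx : phaseDeriv μ ξ x = ω) :
    x ∈ range y := by
  have hdeg := degree_phaseDerivNumerator μ ξ hω
  have hroot' {z : ℝ} (hz : phaseDeriv μ ξ z = ω) : (phaseDerivNumerator μ ξ ω).IsRoot z := by
    rw [IsRoot, eval_phaseDerivNumerator hξ, hz, sub_self, zero_mul]
  have hne : phaseDerivNumerator μ ξ ω ≠ 0 := fun h => by
    rw [h, degree_zero] at hdeg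
    exact WithBot.bot_ne_coe hdeg
  exact (phaseDerivNumerator μ ξ ω).mem_range_of_isRoot hne
    ((natDegree_eq_of_degree_eq_some hdeg).trans_le hN) hy (fun k => hroot' (hroot k)) (hroot' hx)

end Phase

section Alternation

lemma Fin.exists_mem_Ioo_castSucc_succ {α : Type*} [LinearOrder α] {N : ℕ}
    {η : Fin (N + 1) → α} {x : α} (hx : x ∈ Icc (η 0) (η (Fin.last N)))
    (hxη : x ∉ range η) : ∃ j : Fin N, x ∈ Ioo (η j.castSucc) (η j.succ) := by
  classical
  have hne (k : Fin (N + 1)) : η k ≠ x := fun h => hxη ⟨k, h⟩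
  obtain ⟨k, hk, hkmax⟩ := (Finset.univ.filter fun k => η k < x).exists_max_image id
    ⟨0, by simpa using hx.1.lt_of_ne (hne 0)⟩
  rw [Finset.mem_filter] at hk
  obtain ⟨j, rfl⟩ := (Fin.exists_castSucc_eq (i := k)).2 <| by
    rintro rfl; exact (hk.2.trans_le hx.2).false
  refine ⟨j, hk.2, lt_of_not_ge fun hjx => ?_⟩
  have := hkmax j.succ (by simpa using hjx.lt_of_ne (hne _))
  exact (Fin.castSucc_lt_succ (i := j)).not_ge this

lemma StrictMono.notMem_range_of_mem_Ioo {α : Type*} [LinearOrder α] {N : ℕ}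
    {η : Fin (N + 1) → α} (hη : StrictMono η) {j : Fin N} {x : α}
    (hx : x ∈ Ioo (η j.castSucc) (η j.succ)) : x ∉ range η := by
  rintro ⟨k, rfl⟩
  exact (Fin.castSucc_lt_iff_succ_le.1 (hη.lt_iff_lt.1 hx.1)).not_gt (hη.lt_iff_lt.1 hx.2)

lemma strictMonoOn_or_strictAntiOn_of_hasDerivAt_ne_zero {f f' : ℝ → ℝ} {a b : ℝ}
    (hab : a ≤ b) (hc : ContinuousOn f (Icc a b))
    (hf : ∀ x ∈ Ioo a b, HasDerivAt f (f' x) x) (hf' : ∀ x ∈ Ioo a b, f' x ≠ 0) :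
    StrictMonoOn f (Icc a b) ∨ StrictAntiOn f (Icc a b) := by
  have hne : ∀ x ∈ Icc a b, ∀ y ∈ Icc a b, x < y → f x ≠ f y := by
    intro x hx y hy hxy hfxy
    have hsub : Ioo x y ⊆ Ioo a b := Ioo_subset_Ioo hx.1 hy.2
    obtain ⟨c, hc, hc0⟩ := exists_hasDerivAt_eq_zero hxy
      (hc.mono (Icc_subset_Icc hx.1 hy.2)) hfxy fun z hz => hf z (hsub hz)
    exact hf' c (hsub hc) hc0
  refine hc.strictMonoOn_of_injOn_Icc' hab fun x hx y hy hfxy => ?_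
  by_contra hxy
  rcases lt_or_gt_of_ne hxy with h | h
  exacts [hne x hx y hy h hfxy, hne y hy x hx h hfxy.symm]

lemma abs_lt_of_strictMonoOn_or_strictAntiOn {f : ℝ → ℝ} {a b x : ℝ}
    (hf : StrictMonoOn f (Icc a b) ∨ StrictAntiOn f (Icc a b)) (hfab : f b = -f a)
    (hx : x ∈ Ioo a b) : |f x| < |f a| := by
  have ha : a ∈ Icc a b := ⟨le_rfl, (hx.1.trans hx.2).le⟩
  have hb : b ∈ Icc a b := ⟨(hx.1.trans hx.2).le, le_rfl⟩
  have hx' := Ioo_subset_Icc_self hx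
  rcases hf with hf | hf
  · have h1 := hf ha hx' hx.1
    have h2 := hf hx' hb hx.2
    rw [abs_lt, abs_of_neg (by linarith)]
    constructor <;> linarith
  · have h1 := hf ha hx' hx.1
    have h2 := hf hx' hb hx.2
    rw [abs_lt, abs_of_pos (by linarith)]
    constructor <;> linarith

lemma existsUnique_zero_of_strictMonoOn_or_strictAntiOn {f : ℝ → ℝ} {a b : ℝ} (hab : a < b)
    (hc : ContinuousOn f (Icc a b))
    (hf : StrictMonoOn f (Icc a b) ∨ StrictAntiOn f (Icc a b)) (hfab : f b = -f a) :
    ∃! x, x ∈ Ioo a b ∧ f x = 0 := by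
  have ha : a ∈ Icc a b := ⟨le_rfl, hab.le⟩
  have hb : b ∈ Icc a b := ⟨hab.le, le_rfl⟩
  have hinj : InjOn f (Icc a b) := hf.elim StrictMonoOn.injOn StrictAntiOn.injOn
  have hzero : (0 : ℝ) ∈ Ioo (f a) (f b) ∨ (0 : ℝ) ∈ Ioo (f b) (f a) := by
    have := hinj.ne ha hb hab.ne
    rw [hfab] at this ⊢
    rcases lt_or_gt_of_ne this with h | h
    · exact .inl ⟨by linarith, by linarith⟩
    · exact .inr ⟨by linarith, by linarith⟩
  obtain ⟨x, hx, hx0⟩ := hzero.elim (fun h => intermediate_value_Ioo hab.le hc h)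
    (fun h => intermediate_value_Ioo' hab.le hc h)
  exact ⟨x, ⟨hx, hx0⟩, fun y hy => hinj (Ioo_subset_Icc_self hy.1) (Ioo_subset_Icc_self hx)
    (hy.2.trans hx0.symm)⟩

structure IsAlternant {N : ℕ} (e : ℝ → ℝ) (η : Fin (N + 1) → ℝ) (M : ℝ) : Prop where
  strictMono : StrictMono η
  abs_le : ∀ x ∈ Icc (η 0) (η (Fin.last N)), |e x| ≤ M
  abs_eq : ∀ j, |e (η j)| = M
  neg_succ : ∀ j : Fin N, e (η j.succ) = -e (η j.castSucc)

lemma isAlternant_of_eq_sign_mul {N : ℕ} {e : ℝ → ℝ} {η : Fin (N + 1) → ℝ} {M ε : ℝ}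
    (hη : StrictMono η) (hle : ∀ x ∈ Icc (η 0) (η (Fin.last N)), |e x| ≤ M)
    (hε : ε = 1 ∨ ε = -1) (heq : ∀ j : Fin (N + 1), e (η j) = ε * (-1) ^ (j : ℕ) * M) :
    IsAlternant e η M := by
  have hM : 0 ≤ M := (abs_nonneg _).trans (hle (η 0) ⟨le_rfl, hη.monotone (Fin.zero_le _)⟩)
  refine ⟨hη, hle, fun j => ?_, fun j => ?_⟩
  · rw [heq, abs_mul, abs_mul, abs_pow, abs_neg, abs_one, one_pow, mul_one, abs_of_nonneg hM]
    rcases hε with rfl | rfl <;> simp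
  · rw [heq, heq, Fin.val_succ, Fin.val_castSucc, pow_succ]
    ring

namespace IsAlternant

lemma hasDerivAt_eq_zero {N : ℕ} {e : ℝ → ℝ} {η : Fin (N + 1 + 1) → ℝ} {M : ℝ}
    (hA : IsAlternant e η M) (k : Fin N) {d : ℝ} (he : HasDerivAt e d (η k.succ.castSucc)) :
    d = 0 := by
  have hmem : Icc (η 0) (η (Fin.last (N + 1))) ∈ 𝓝 (η k.succ.castSucc) :=
    Icc_mem_nhds (hA.strictMono (Fin.castSucc_pos_iff.2 k.succ_pos))
      (hA.strictMono (Fin.castSucc_lt_last _))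
  have habs : IsLocalMax (fun x => |e x|) (η k.succ.castSucc) :=
    Filter.mem_of_superset hmem fun x hx => (hA.abs_le x hx).trans (hA.abs_eq _).ge
  refine IsLocalExtr.hasDerivAt_eq_zero ?_ he
  rcases le_total 0 (e (η k.succ.castSucc)) with h | h
  · refine .inr (habs.mono fun x hx => ?_)
    simp only [abs_of_nonneg h] at hx
    exact (le_abs_self _).trans hx
  · refine .inl (habs.mono fun x hx => ?_)
    simp only [abs_of_nonpos h] at hx
    linarith [neg_abs_le (e x)]

variable {N : ℕ} {e : ℝ → ℝ} {η : Fin (N + 1) → ℝ} {M : ℝ}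

lemma mem_Icc (hA : IsAlternant e η M) (j : Fin (N + 1)) :
    η j ∈ Icc (η 0) (η (Fin.last N)) :=
  ⟨hA.strictMono.monotone (Fin.zero_le j), hA.strictMono.monotone (Fin.le_last j)⟩

variable {e' : ℝ → ℝ}

lemma strictMonoOn_or_strictAntiOn (hA : IsAlternant e η M)
    (he : ∀ x, HasDerivAt e (e' x) x) (hcrit : ∀ x, e' x = 0 → x ∈ range η) (j : Fin N) :
    StrictMonoOn e (Icc (η j.castSucc) (η j.succ)) ∨
      StrictAntiOn e (Icc (η j.castSucc) (η j.succ)) :=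
  strictMonoOn_or_strictAntiOn_of_hasDerivAt_ne_zero (hA.strictMono Fin.castSucc_lt_succ).le
    (fun x _ => (he x).continuousAt.continuousWithinAt) (fun x _ => he x)
    fun x hx h0 => hA.strictMono.notMem_range_of_mem_Ioo hx (hcrit x h0)

lemma setOf_abs_eq (hA : IsAlternant e η M)
    (he : ∀ x, HasDerivAt e (e' x) x) (hcrit : ∀ x, e' x = 0 → x ∈ range η) :
    {x | x ∈ Icc (η 0) (η (Fin.last N)) ∧ |e x| = M} = range η := by
  refine Subset.antisymm (fun x ⟨hx, hxM⟩ => ?_) ?_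
  · by_contra hxη
    obtain ⟨j, hj⟩ := Fin.exists_mem_Ioo_castSucc_succ hx hxη
    have := abs_lt_of_strictMonoOn_or_strictAntiOn (hA.strictMonoOn_or_strictAntiOn he hcrit j)
      (hA.neg_succ j) hj
    rw [hxM, hA.abs_eq] at this
    exact this.false
  · rintro _ ⟨j, rfl⟩
    exact ⟨hA.mem_Icc j, hA.abs_eq j⟩

lemma existsUnique_zero (hA : IsAlternant e η M)
    (he : ∀ x, HasDerivAt e (e' x) x) (hcrit : ∀ x, e' x = 0 → x ∈ range η) (j : Fin N) :
    ∃! x, x ∈ Ioo (η j.castSucc) (η j.succ) ∧ e x = 0 :=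
  existsUnique_zero_of_strictMonoOn_or_strictAntiOn (hA.strictMono Fin.castSucc_lt_succ)
    (fun x _ => (he x).continuousAt.continuousWithinAt)
    (hA.strictMonoOn_or_strictAntiOn he hcrit j) (hA.neg_succ j)

end IsAlternant

end Alternation

section ErrorNorm

lemma norm_cexp_I_mul_sub_cexp_I_mul (a b : ℝ) :
    ‖Complex.exp (Complex.I * a) - Complex.exp (Complex.I * b)‖ = 2 * |sin ((a - b) / 2)| := by
  have h : Complex.exp (Complex.I * a) - Complex.exp (Complex.I * b)
      = Complex.exp (Complex.I * b) * (Complex.exp (Complex.I * ↑(a - b)) - 1) := by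
    rw [mul_sub, ← Complex.exp_add, mul_one]
    push_cast
    ring_nf
  rw [h, norm_mul, Complex.norm_exp_I_mul_ofReal, one_mul, Complex.norm_exp_I_mul_ofReal_sub_one,
    norm_mul, Real.norm_two, Real.norm_eq_abs]

variable {ω : ℝ} {r : RatFunc ℂ} {g : ℝ → ℝ}

lemma norm_ieval_sub_cexp (hr : ∀ x, ieval r x = Complex.exp (Complex.I * g x)) {x : ℝ}
    (hx : |g x - ω * x| ≤ π) :
    ‖ieval r x - Complex.exp (Complex.I * ω * x)‖ = 2 * sin (|g x - ω * x| / 2) := by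
  have hωx : Complex.I * ω * x = Complex.I * ↑(ω * x) := by push_cast; ring
  have hπ : |(g x - ω * x) / 2| ≤ π := by rw [abs_div, abs_two]; linarith [pi_pos]
  rw [hr, hωx, norm_cexp_I_mul_sub_cexp_I_mul, abs_sin_eq_sin_abs_of_abs_le_pi hπ, abs_div,
    abs_two]

lemma abs_le_phaseErrSup (hc : ContinuousOn (fun x => g x - ω * x) (Icc (-1) 1)) {x : ℝ}
    (hx : x ∈ Icc (-1) 1) : |g x - ω * x| ≤ phaseErrSup ω g :=
  le_csSup (isCompact_Icc.bddAbove_image hc.abs) (mem_image_of_mem _ hx)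

lemma errNorm_eq_two_mul_sin (hr : ∀ x, ieval r x = Complex.exp (Complex.I * g x))
    (hc : ContinuousOn (fun x => g x - ω * x) (Icc (-1) 1)) (hπ : phaseErrSup ω g < π)
    {x₀ : ℝ} (hx₀ : x₀ ∈ Icc (-1) 1) (hx₀M : |g x₀ - ω * x₀| = phaseErrSup ω g) :
    errNorm ω r = 2 * sin (phaseErrSup ω g / 2) := by
  refine IsGreatest.csSup_eq ⟨⟨x₀, hx₀, ?_⟩, ?_⟩
  · dsimp only
    rw [norm_ieval_sub_cexp hr (hx₀M.trans_le hπ.le), hx₀M]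
  · rintro _ ⟨x, hx, rfl⟩
    have hxM := abs_le_phaseErrSup hc hx
    dsimp only
    rw [norm_ieval_sub_cexp hr (hxM.trans hπ.le)]
    gcongr 2 * ?_
    exact sin_le_sin_of_le_of_le_pi_div_two (by linarith [abs_nonneg (g x - ω * x), pi_pos])
      (by linarith) (by linarith)

lemma norm_ieval_sub_cexp_eq_errNorm_iff (hr : ∀ x, ieval r x = Complex.exp (Complex.I * g x))
    (hc : ContinuousOn (fun x => g x - ω * x) (Icc (-1) 1)) (hπ : phaseErrSup ω g < π)
    {x₀ : ℝ} (hx₀ : x₀ ∈ Icc (-1) 1) (hx₀M : |g x₀ - ω * x₀| = phaseErrSup ω g)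
    {x : ℝ} (hx : x ∈ Icc (-1) 1) :
    ‖ieval r x - Complex.exp (Complex.I * ω * x)‖ = errNorm ω r ↔
      |g x - ω * x| = phaseErrSup ω g := by
  have hxM := abs_le_phaseErrSup hc hx
  have hM := (abs_nonneg _).trans hxM
  rw [norm_ieval_sub_cexp hr (hxM.trans hπ.le), errNorm_eq_two_mul_sin hr hc hπ hx₀ hx₀M]
  refine ⟨fun h => ?_, fun h => by rw [h]⟩
  have := injOn_sin ⟨by linarith [abs_nonneg (g x - ω * x), pi_pos], by linarith⟩
    ⟨by linarith [pi_pos], by linarith⟩ (mul_left_cancel₀ two_ne_zero h)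
  linarith

end ErrorNorm

theorem best_approximation_interpolation_general (n : ℕ) (ω : ℝ)
    (hω : 0 < ω)
    (r : RatFunc ℂ)
    (g : ℝ → ℝ) (hg : IsPhaseFun n r g) (hgb : phaseErrSup ω g < Real.pi)
    (η : Fin (2 * n + 1 + 1) → ℝ) (hη : StrictMono η)
    (hη0 : η 0 = -1) (hη1 : η (Fin.last (2 * n + 1)) = 1)
    (halt : ∃ ε : ℝ, (ε = 1 ∨ ε = -1) ∧
      ∀ j : Fin (2 * n + 1 + 1),
        g (η j) - ω * η j = ε * (-1 : ℝ) ^ (j : ℕ) * phaseErrSup ω g) :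
    (∀ j : Fin (2 * n + 1 + 1),
      ‖ieval r (η j) - Complex.exp (Complex.I * ω * (η j : ℝ))‖ = errNorm ω r) ∧
    ({x | x ∈ Set.Icc (-1 : ℝ) 1 ∧
        ‖ieval r x - Complex.exp (Complex.I * ω * x)‖ = errNorm ω r} =
      Set.range η) ∧
    ({x | x ∈ Set.Icc (-1 : ℝ) 1 ∧ |g x - ω * x| = phaseErrSup ω g} = Set.range η) ∧
    (∀ j : Fin (2 * n + 1),
      StrictMonoOn (fun t => g t - ω * t) (Set.Icc (η j.castSucc) (η j.succ)) ∨
      StrictAntiOn (fun t => g t - ω * t) (Set.Icc (η j.castSucc) (η j.succ))) ∧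
    (∀ j : Fin (2 * n + 1),
      ∃! x : ℝ, x ∈ Set.Ioo (η j.castSucc) (η j.succ) ∧ g x - ω * x = 0) ∧
    (∀ j : Fin (2 * n + 1), ∀ x ∈ Set.Ioo (η j.castSucc) (η j.succ), g x - ω * x = 0 →
      deriv (fun t => g t - ω * t) x ≠ 0 ∧
      ieval r x = Complex.exp (Complex.I * ω * x)) := by
  obtain ⟨m, θ, μ, ξ, hm, hξ, -, hgθ, hr⟩ := hg
  obtain ⟨ε, hε, hηε⟩ := halt
  have he := hasDerivAt_phaseError hgθ hξ ω
  have hc : ContinuousOn (fun t => g t - ω * t) (Icc (-1) 1) :=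
    fun x _ => (he x).continuousAt.continuousWithinAt
  have hIcc : Icc (η 0) (η (Fin.last _)) = Icc (-1) 1 := by rw [hη0, hη1]
  have hA : IsAlternant (fun t => g t - ω * t) η (phaseErrSup ω g) :=
    isAlternant_of_eq_sign_mul hη (hIcc ▸ fun x hx => abs_le_phaseErrSup hc hx) hε hηε
  have hcrit (x : ℝ) (hx : phaseDeriv μ ξ x - ω = 0) : x ∈ range η := by
    obtain ⟨k, rfl⟩ := mem_range_of_phaseDeriv_eq hξ hω.ne' (by rw [Fintype.card_fin]; omega)
      (hη.injective.comp ((Fin.castSucc_injective _).comp (Fin.succ_injective _)))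
      (fun k => sub_eq_zero.1 (hA.hasDerivAt_eq_zero k (he _))) (sub_eq_zero.1 hx)
    exact mem_range_self _
  have herr {x : ℝ} (hx : x ∈ Icc (-1 : ℝ) 1) :=
    norm_ieval_sub_cexp_eq_errNorm_iff hr hc hgb (hIcc ▸ hA.mem_Icc 0) (hA.abs_eq 0) hx
  have hmax := hIcc ▸ hA.setOf_abs_eq he hcrit
  refine ⟨fun j => (herr (hIcc ▸ hA.mem_Icc j)).2 (hA.abs_eq j), ?_, hmax,
    hA.strictMonoOn_or_strictAntiOn he hcrit, hA.existsUnique_zero he hcrit,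
    fun j x hx hx0 => ⟨?_, ?_⟩⟩
  · rw [← hmax]
    exact Set.ext fun x => and_congr_right herr
  · rw [(he x).deriv]
    exact fun h => hA.strictMono.notMem_range_of_mem_Ioo hx (hcrit x h)
  · rw [hr, show g x = ω * x by linarith]
    push_cast
    ring_nf

/-- For the unitary best approximation `r ∈ 𝒰_n` with unique phase function
`g` and equioscillation points `−1 = η₁ < ⋯ < η_{2n+2} = 1`: the approximation error is
maximal exactly at the equioscillation points (as is the phase error), the phase error is
strictly monotonic between neighboring equioscillation points, and between each pair of
neighboring equioscillation points the phase error has exactly one zero, which is simple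
and at which `r` interpolates the exponential. -/
theorem best_approximation_interpolation (n : ℕ) (ω : ℝ)
    (hω : 0 < ω) (hω' : ω < ((n : ℝ) + 1) * Real.pi)
    (r : RatFunc ℂ) (hr : r ∈ unitaryClass n)
    (hbest : ∀ u ∈ unitaryClass n, errNorm ω r ≤ errNorm ω u)
    (g : ℝ → ℝ) (hg : IsPhaseFun n r g) (hgb : phaseErrSup ω g < Real.pi)
    (η : Fin (2 * n + 1 + 1) → ℝ) (hη : StrictMono η)
    (hη0 : η 0 = -1) (hη1 : η (Fin.last (2 * n + 1)) = 1)
    (halt : ∃ ε : ℝ, (ε = 1 ∨ ε = -1) ∧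
      ∀ j : Fin (2 * n + 1 + 1),
        g (η j) - ω * η j = ε * (-1 : ℝ) ^ (j : ℕ) * phaseErrSup ω g) :
    (∀ j : Fin (2 * n + 1 + 1),
      ‖ieval r (η j) - Complex.exp (Complex.I * ω * (η j : ℝ))‖ = errNorm ω r) ∧
    ({x | x ∈ Set.Icc (-1 : ℝ) 1 ∧
        ‖ieval r x - Complex.exp (Complex.I * ω * x)‖ = errNorm ω r} =
      Set.range η) ∧
    ({x | x ∈ Set.Icc (-1 : ℝ) 1 ∧ |g x - ω * x| = phaseErrSup ω g} = Set.range η) ∧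
    (∀ j : Fin (2 * n + 1),
      StrictMonoOn (fun t => g t - ω * t) (Set.Icc (η j.castSucc) (η j.succ)) ∨
      StrictAntiOn (fun t => g t - ω * t) (Set.Icc (η j.castSucc) (η j.succ))) ∧
    (∀ j : Fin (2 * n + 1),
      ∃! x : ℝ, x ∈ Set.Ioo (η j.castSucc) (η j.succ) ∧ g x - ω * x = 0) ∧
    (∀ j : Fin (2 * n + 1), ∀ x ∈ Set.Ioo (η j.castSucc) (η j.succ), g x - ω * x = 0 →
      deriv (fun t => g t - ω * t) x ≠ 0 ∧
      ieval r x = Complex.exp (Complex.I * ω * x)) :=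
  best_approximation_interpolation_general n ω hω r g hg hgb η hη hη0 hη1 halt
end
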